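/- Let λ ∈ ℝ, let x, x̃ : ℤ/Nℤ → ℝ with sinh(x̃_k−x_k−λ) ≠ 0 and sinh(x_k−x̃_{k−1}−λ) ≠ 0 for all k, and define q : ℤ/Nℤ → ℝ by q_k = (sinh(x̃_k−x_k+λ)/sinh(x̃_k−x_k−λ))·(sinh(x_k−x̃_{k−1}+λ)/sinh(x_k−x̃_{k−1}−λ)). Then the monodromy matrix T = L_{N−1}·L_{N−2}·⋯·L_1·L_0 satisfies T · (e^{2x̃_{−1}}, 1)ᵀ = (∏_{k∈ℤ/Nℤ} (1−e^{4λ})·sinh(x_k−x̃_{k−1}+λ)/sinh(x̃_k−x_k−λ)) · (e^{2x̃_{−1}}, 1)ᵀ; in particular, (1−e^{4λ})^N·∏_{k∈ℤ/Nℤ} sinh(x_k−x̃_{k−1}+λ)/sinh(x̃_k−x_k−λ) is an eigenvalue of T. -/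

import Mathlib

/-- Transition matrix of the zero curvature representation of the Bäcklund
transformation for the symmetric hyperbolic multiplicative Toda-type system
(with `q_k = e^{2p_k}`). -/
noncomputable def hypMultTodaL (N : ℕ) (lam : ℝ) (x q : ZMod N → ℝ) (i : ℕ) :
    Matrix (Fin 2) (Fin 2) ℝ :=
  !![Real.exp (4 * lam) * q (i : ZMod N) - 1,
       Real.exp (2 * lam) * Real.exp (2 * x (i : ZMod N)) * (1 - q (i : ZMod N));
     Real.exp (2 * lam) * Real.exp (-(2 * x (i : ZMod N))) * (q (i : ZMod N) - 1),
       Real.exp (4 * lam) - q (i : ZMod N)]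

/-- Monodromy matrix `T = L_{N-1} ⬝ ⋯ ⬝ L_1 ⬝ L_0`. -/
noncomputable def hypMultTodaT (N : ℕ) (lam : ℝ) (x q : ZMod N → ℝ) :
    Matrix (Fin 2) (Fin 2) ℝ :=
  ((List.range N).reverse.map (hypMultTodaL N lam x q)).prod

/-!
Each `L_k` carries `(e^{x̃_{k-1}}, e^{-x̃_{k-1}})` to a multiple of `(e^{x̃_k}, e^{-x̃_k})`, the factor
being `(1 - e^{4λ}) sinh(x_k - x̃_{k-1} + λ) / sinh(x̃_k - x_k - λ)`: this is precisely the relation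
by which the Bäcklund transformation defines `q_k`. Going once around the periodic chain returns
to the starting vector, scaled by the product of these factors. (Normalising the vector as
`(e^{2x̃}, 1)` instead would add factors `e^{x̃_{k-1} - x̃_k}` that only telescope away.)
-/

open Real Matrix Finset

noncomputable def expPair (t : ℝ) : Fin 2 → ℝ := ![exp t, exp (-t)]

lemma exp_smul_expPair (t : ℝ) : exp t • expPair t = ![exp (2 * t), 1] := by
  ext i
  fin_cases i <;> simp [expPair, ← Real.exp_add, two_mul]

lemma sinh_sub_sub_eq (u v w : ℝ) :
    sinh (u - v - w) = (exp u ^ 2 - exp v ^ 2 * exp w ^ 2) / (2 * exp u * exp v * exp w) := by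
  rw [sinh_eq, Real.exp_sub, Real.exp_sub, Real.exp_neg, Real.exp_sub, Real.exp_sub]
  field_simp

lemma sinh_sub_add_eq (u v w : ℝ) :
    sinh (u - v + w) = (exp u ^ 2 * exp w ^ 2 - exp v ^ 2) / (2 * exp u * exp v * exp w) := by
  rw [sinh_eq, Real.exp_add, Real.exp_sub, Real.exp_neg, Real.exp_add, Real.exp_sub]
  field_simp

lemma backlund_mulVec_expPair (lam a b c q : ℝ) (hb : sinh (b - a - lam) ≠ 0)
    (hc : sinh (a - c - lam) ≠ 0)
    (hq : q = sinh (b - a + lam) / sinh (b - a - lam) * (sinh (a - c + lam) / sinh (a - c - lam))) :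
    !![exp (4 * lam) * q - 1, exp (2 * lam) * exp (2 * a) * (1 - q);
       exp (2 * lam) * exp (-(2 * a)) * (q - 1), exp (4 * lam) - q] *ᵥ expPair c =
      ((1 - exp (4 * lam)) * sinh (a - c + lam) / sinh (b - a - lam)) • expPair b := by
  subst hq
  have h2 : ∀ t, exp (2 * t) = exp t ^ 2 := fun t => by rw [← exp_nat_mul]; norm_num
  have h4 : exp (4 * lam) = exp lam ^ 4 := by rw [← exp_nat_mul]; norm_num
  ext i
  fin_cases i <;>
  · simp only [expPair, mulVec, dotProduct, Fin.sum_univ_two, of_apply, cons_val_zero,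
      cons_val_one, cons_val_fin_one, Pi.smul_apply, smul_eq_mul, Fin.zero_eta, Fin.mk_one,
      Real.exp_neg, h2, h4]
    -- clear the `sinh` denominators while `sinh` is still atomic, then expand into exponentials
    field_simp
    simp only [sinh_sub_sub_eq, sinh_sub_add_eq]
    field_simp
    ring

theorem Matrix.prod_map_range_reverse_mulVec {R n : Type*} [CommSemiring R] [Fintype n]
    [DecidableEq n] (M : ℕ → Matrix n n R) (v : ℕ → n → R) (c : ℕ → R)
    (h : ∀ i, M i *ᵥ v i = c i • v (i + 1)) (m : ℕ) :
    ((List.range m).reverse.map M).prod *ᵥ v 0 = (∏ i ∈ range m, c i) • v m := by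
  induction m with
  | zero => simp
  | succ m ih =>
    rw [List.range_succ, List.reverse_append, List.reverse_singleton, List.singleton_append,
      List.map_cons, List.prod_cons, ← mulVec_mulVec, ih, mulVec_smul, h, prod_range_succ,
      smul_smul, mul_comm]

theorem ZMod.prod_range_natCast {M : Type*} [CommMonoid M] (N : ℕ) [NeZero N] (f : ZMod N → M) :
    ∏ i ∈ range N, f i = ∏ k : ZMod N, f k :=
  prod_nbij' (fun i => (i : ZMod N)) ZMod.val (fun _ _ => mem_univ _)
    (fun k _ => mem_range.2 (ZMod.val_lt k)) (fun _ hi => ZMod.val_cast_of_lt (mem_range.1 hi))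
    (fun k _ => ZMod.natCast_zmod_val k) (fun _ _ => rfl)

theorem Matrix.hasEigenvalue_toLin'_of_mulVec_eq_smul {R n : Type*} [CommRing R] [Fintype n]
    [DecidableEq n] {A : Matrix n n R} {μ : R} {v : n → R} (hv : v ≠ 0) (h : A *ᵥ v = μ • v) :
    Module.End.HasEigenvalue (toLin' A) μ :=
  Module.End.hasEigenvalue_of_hasEigenvector
    ⟨Module.End.mem_eigenspace_iff.2 (by rwa [toLin'_apply]), hv⟩

lemma hypMultTodaL_mulVec_expPair (N : ℕ) (lam : ℝ) (x xt q : ZMod N → ℝ)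
    (hx1 : ∀ k : ZMod N, sinh (xt k - x k - lam) ≠ 0)
    (hx2 : ∀ k : ZMod N, sinh (x k - xt (k - 1) - lam) ≠ 0)
    (hq : ∀ k : ZMod N,
      q k = (sinh (xt k - x k + lam) / sinh (xt k - x k - lam)) *
        (sinh (x k - xt (k - 1) + lam) / sinh (x k - xt (k - 1) - lam))) (i : ℕ) :
    hypMultTodaL N lam x q i *ᵥ expPair (xt ((i : ZMod N) - 1)) =
      ((1 - exp (4 * lam)) * sinh (x i - xt ((i : ZMod N) - 1) + lam) / sinh (xt i - x i - lam)) •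
        expPair (xt (((i + 1 : ℕ) : ZMod N) - 1)) := by
  rw [Nat.cast_succ, add_sub_cancel_right]
  exact backlund_mulVec_expPair _ _ _ _ _ (hx1 _) (hx2 _) (hq _)

/-- For the periodic symmetric hyperbolic multiplicative
Toda-type system, `(1−e^{4λ})^N ∏ sinh(x_k − x̃_{k−1} + λ)/sinh(x̃_k − x_k − λ)`
is an eigenvalue of the monodromy matrix, with eigenvector `(e^{2x̃_{−1}}, 1)ᵀ`. -/
theorem hypMultToda_monodromy_eigenvalue
    (N : ℕ) [NeZero N] (lam : ℝ) (x xt q : ZMod N → ℝ)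
    (hx1 : ∀ k : ZMod N, Real.sinh (xt k - x k - lam) ≠ 0)
    (hx2 : ∀ k : ZMod N, Real.sinh (x k - xt (k - 1) - lam) ≠ 0)
    (hq : ∀ k : ZMod N,
      q k = (Real.sinh (xt k - x k + lam) / Real.sinh (xt k - x k - lam)) *
        (Real.sinh (x k - xt (k - 1) + lam) / Real.sinh (x k - xt (k - 1) - lam))) :
    (hypMultTodaT N lam x q).mulVec ![Real.exp (2 * xt (-1)), 1] =
      (∏ k : ZMod N, (1 - Real.exp (4 * lam)) *
          Real.sinh (x k - xt (k - 1) + lam) / Real.sinh (xt k - x k - lam)) •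
        ![Real.exp (2 * xt (-1)), 1] ∧
    Module.End.HasEigenvalue (Matrix.toLin' (hypMultTodaT N lam x q))
      ((1 - Real.exp (4 * lam)) ^ N *
        ∏ k : ZMod N, Real.sinh (x k - xt (k - 1) + lam) / Real.sinh (xt k - x k - lam)) := by
  have hT := Matrix.prod_map_range_reverse_mulVec _ _ _
    (hypMultTodaL_mulVec_expPair N lam x xt q hx1 hx2 hq) N
  simp only [Nat.cast_zero, zero_sub, ZMod.natCast_self,
    ZMod.prod_range_natCast N fun k => (1 - exp (4 * lam)) *
      sinh (x k - xt (k - 1) + lam) / sinh (xt k - x k - lam)] at hT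
  have hmul : hypMultTodaT N lam x q *ᵥ ![exp (2 * xt (-1)), 1] =
      (∏ k : ZMod N, (1 - exp (4 * lam)) *
        sinh (x k - xt (k - 1) + lam) / sinh (xt k - x k - lam)) • ![exp (2 * xt (-1)), 1] := by
    rw [← exp_smul_expPair, mulVec_smul, hypMultTodaT, hT, smul_comm]
  have hprod : (∏ k : ZMod N, (1 - exp (4 * lam)) *
        sinh (x k - xt (k - 1) + lam) / sinh (xt k - x k - lam)) =
      (1 - exp (4 * lam)) ^ N *
        ∏ k : ZMod N, sinh (x k - xt (k - 1) + lam) / sinh (xt k - x k - lam) := by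
    simp_rw [mul_div_assoc]
    rw [prod_mul_distrib, prod_const, card_univ, ZMod.card]
  refine ⟨hmul, hasEigenvalue_toLin'_of_mulVec_eq_smul ?_ (hprod ▸ hmul)⟩
  simp
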